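/- arXiv:2105.13322 — 4 statements merged into one kernel-verified Lean document; each statement's English description precedes it below -/
import Mathlib

section
/- Let G be a finite group that is not a cyclic group of prime power order, and suppose κ(P(G)) = δ(P(G)). If x ∈ G satisfies deg(x) = δ(P(G)) in P(G), then x has order 2; in particular G has even order. -/
/-- The power graph of a group: distinct `x` and `y` are adjacent iff one is a
positive power of the other. -/
def powerGraph (G : Type*) [Group G] : SimpleGraph G where
  Adj x y := x ≠ y ∧ ((∃ k : ℕ, 0 < k ∧ x = y ^ k) ∨ (∃ k : ℕ, 0 < k ∧ y = x ^ k))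
  symm := by
    constructor
    intro x y h
    exact ⟨h.1.symm, h.2.symm⟩
  loopless := by
    constructor
    intro x h
    exact h.1 rfl

noncomputable instance powerGraphDecidableAdj (G : Type*) [Group G] :
    DecidableRel (powerGraph G).Adj :=
  Classical.decRel _

/-- The vertex connectivity of a finite graph: the minimum number of vertices whose
deletion yields a disconnected graph or a graph with exactly one vertex. -/
noncomputable def vertexConnectivity {V : Type*} [Fintype V] (Γ : SimpleGraph V) : ℕ :=
  sInf {n | ∃ S : Finset V, S.card = n ∧
    (¬ (SimpleGraph.induce ((↑S : Set V)ᶜ) Γ).Preconnected ∨ ((↑S : Set V)ᶜ).ncard = 1)}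

/-- A subgroup is a maximal cyclic subgroup if it is cyclic and not properly contained
in any cyclic subgroup. -/
def IsMaximalCyclic {G : Type*} [Group G] (M : Subgroup G) : Prop :=
  IsCyclic ↥M ∧ ∀ N : Subgroup G, IsCyclic ↥N → M ≤ N → M = N

/-- `K` is a maximal cyclic subgroup of the subgroup `H`. -/
def IsMaximalCyclicIn {G : Type*} [Group G] (H K : Subgroup G) : Prop :=
  IsCyclic ↥K ∧ K ≤ H ∧ ∀ N : Subgroup G, IsCyclic ↥N → N ≤ H → K ≤ N → K = N

/-- A generalized quaternion group: a dicyclic group `Q_{4n}` with `n ≥ 2` a power of 2. -/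
def IsGeneralizedQuaternion (G : Type*) [Group G] : Prop :=
  ∃ n : ℕ, 2 ≤ n ∧ (∃ k : ℕ, n = 2 ^ k) ∧ Nonempty (G ≃* QuaternionGroup n)

/-!
In a finite group, `x` and `y` are adjacent in the power graph iff they are distinct and one lies
in the cyclic subgroup generated by the other; in particular `x` and `x⁻¹` have the same
neighbours. If a vertex `x` of minimum degree were adjacent to every other vertex, all vertices
would be, so any two elements would generate comparable cyclic subgroups, forcing `G` to be cyclic
of prime power order. Otherwise `x ≠ 1`, and if `x ≠ x⁻¹` then deleting the `deg x - 1` neighbours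
of `x` other than `x⁻¹` isolates `{x, x⁻¹}`, so `κ < deg x = δ`. Hence `x = x⁻¹`, i.e. `x` has
order `2`.
-/

open SimpleGraph Subgroup

section Connectivity

variable {V : Type*} {Γ : SimpleGraph V}

lemma not_preconnected_induce_of_adj_closed {s T : Set V} {a b : V} (ha : a ∈ s) (hb : b ∈ s)
    (haT : a ∈ T) (hbT : b ∉ T) (hT : ∀ c ∈ s, ∀ d ∈ s, c ∈ T → Γ.Adj c d → d ∈ T) :
    ¬ (Γ.induce s).Preconnected := by
  intro h
  obtain ⟨p⟩ := h ⟨a, ha⟩ ⟨b, hb⟩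
  obtain ⟨d, -, hdT, hdT'⟩ := p.exists_boundary_dart {c | c.1 ∈ T} haT hbT
  exact hdT' (hT _ d.fst.2 _ d.snd.2 hdT d.adj)

variable [Fintype V]

lemma vertexConnectivity_le_card_of_not_preconnected (S : Finset V)
    (h : ¬ (Γ.induce (↑S : Set V)ᶜ).Preconnected) : vertexConnectivity Γ ≤ S.card :=
  Nat.sInf_le ⟨S, rfl, Or.inl h⟩

/-- Deleting the neighbours of `u` other than `v` cuts `{u, v}` off from a non-neighbour of `u`. -/
lemma vertexConnectivity_lt_degree_of_dominates [DecidableEq V] [DecidableRel Γ.Adj] {u v : V}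
    (huv : Γ.Adj u v) (hdom : ∀ w, w ≠ u → Γ.Adj v w → Γ.Adj u w) (hu : ¬ Γ.IsUniversal u) :
    vertexConnectivity Γ < Γ.degree u := by
  obtain ⟨z, huz, hnadj⟩ : ∃ z, u ≠ z ∧ ¬ Γ.Adj u z := by
    simpa [SimpleGraph.IsUniversal] using hu
  set S := (Γ.neighborFinset u).erase v
  have hclosed : ∀ c ∈ (↑S : Set V)ᶜ, ∀ d ∈ (↑S : Set V)ᶜ, c ∈ ({u, v} : Set V) →
      Γ.Adj c d → d ∈ ({u, v} : Set V) := by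
    intro c _ d hd hc hcd
    simp only [Set.mem_compl_iff, Finset.coe_erase, Set.mem_sdiff, Finset.mem_coe,
      mem_neighborFinset, Set.mem_singleton_iff, not_and, not_not, S] at hd
    rcases hc with rfl | rfl
    · exact Or.inr (hd hcd)
    · by_cases hdu : d = u
      · exact Or.inl hdu
      · exact Or.inr (hd (hdom d hdu hcd))
  calc vertexConnectivity Γ ≤ S.card := by
        refine vertexConnectivity_le_card_of_not_preconnected S
          (not_preconnected_induce_of_adj_closed (a := u) (b := z) ?_ ?_ (by simp) ?_ hclosed)
        · simp [S]
        · simp [S, hnadj]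
        · rintro (rfl | rfl)
          exacts [huz rfl, hnadj huv]
    _ < Γ.degree u := by
        rw [← card_neighborFinset_eq_degree]
        exact Finset.card_erase_lt_of_mem ((mem_neighborFinset _ _ _).2 huv)

lemma SimpleGraph.IsUniversal.of_degree_eq_minDegree [DecidableRel Γ.Adj] {u : V}
    (hu : Γ.IsUniversal u) (hmin : Γ.degree u = Γ.minDegree) (v : V) : Γ.IsUniversal v := by
  rw [← degree_eq_card_sub_one] at hu ⊢
  have := Γ.minDegree_le_degree v
  have := Γ.degree_lt_card_verts v
  omega

end Connectivity

section PowerGraph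

variable {G : Type*} [Group G] [Finite G]

lemma exists_pos_pow_eq_iff_mem_zpowers {a b : G} :
    (∃ k : ℕ, 0 < k ∧ a = b ^ k) ↔ a ∈ zpowers b := by
  refine ⟨fun ⟨k, _, hk⟩ => hk ▸ npow_mem_zpowers b k, fun h => ?_⟩
  obtain ⟨n, rfl⟩ := mem_powers_iff_mem_zpowers.mpr h
  rcases n.eq_zero_or_pos with rfl | hn
  · exact ⟨orderOf b, orderOf_pos b, by simp [pow_orderOf_eq_one]⟩
  · exact ⟨n, hn, rfl⟩

lemma powerGraph_adj_iff {a b : G} :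
    (powerGraph G).Adj a b ↔ a ≠ b ∧ (a ∈ zpowers b ∨ b ∈ zpowers a) := by
  simp only [powerGraph, exists_pos_pow_eq_iff_mem_zpowers]

lemma powerGraph_isUniversal_one : (powerGraph G).IsUniversal 1 :=
  fun _ h => powerGraph_adj_iff.2 ⟨h, Or.inl (one_mem _)⟩

lemma powerGraph_adj_inv {x : G} (hx : x ≠ x⁻¹) : (powerGraph G).Adj x x⁻¹ :=
  powerGraph_adj_iff.2 ⟨hx, Or.inr (inv_mem (mem_zpowers x))⟩

lemma powerGraph_adj_of_adj_inv {x w : G} (hw : w ≠ x) (h : (powerGraph G).Adj x⁻¹ w) :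
    (powerGraph G).Adj x w := by
  rw [powerGraph_adj_iff, zpowers_inv, inv_mem_iff] at h
  exact powerGraph_adj_iff.2 ⟨hw.symm, h.2⟩

lemma mem_zpowers_or_of_forall_isUniversal (h : ∀ v, (powerGraph G).IsUniversal v) (a b : G) :
    a ∈ zpowers b ∨ b ∈ zpowers a := by
  by_cases hab : a = b
  · exact Or.inl (hab ▸ mem_zpowers a)
  · exact (powerGraph_adj_iff.1 (h a hab)).2

lemma isCyclic_of_mem_zpowers_or (h : ∀ a b : G, a ∈ zpowers b ∨ b ∈ zpowers a) :
    IsCyclic G := by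
  obtain ⟨g, hg⟩ := Finite.exists_max (orderOf : G → ℕ)
  refine isCyclic_iff_exists_zpowers_eq_top.2 ⟨g, eq_top_iff.2 fun y _ => ?_⟩
  rcases h y g with hy | hgy
  · exact hy
  · have hle : zpowers g ≤ zpowers y := zpowers_le.2 hgy
    have heq : zpowers g = zpowers y :=
      eq_of_le_of_card_ge hle (by rw [Nat.card_zpowers, Nat.card_zpowers]; exact hg y)
    exact heq ▸ mem_zpowers y

end PowerGraph

lemma card_eq_prime_pow_of_orderOf_dvd_total {G : Type*} [Group G] [Fintype G]
    (h : ∀ a b : G, orderOf a ∣ orderOf b ∨ orderOf b ∣ orderOf a) :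
    ∃ p k : ℕ, p.Prime ∧ Fintype.card G = p ^ k := by
  by_cases h1 : Fintype.card G = 1
  · exact ⟨2, 0, Nat.prime_two, h1⟩
  obtain ⟨p, hp, hpd⟩ := Nat.exists_prime_and_dvd h1
  refine ⟨p, _, hp, Nat.eq_prime_pow_of_unique_prime_dvd Fintype.card_ne_zero
    fun {q} hq hqd => ?_⟩
  have := Fact.mk hp
  have := Fact.mk hq
  obtain ⟨a, ha⟩ := exists_prime_orderOf_dvd_card p hpd
  obtain ⟨b, hb⟩ := exists_prime_orderOf_dvd_card q hqd
  rcases h a b with hab | hba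
  · rw [ha, hb] at hab
    exact ((Nat.prime_dvd_prime_iff_eq hp hq).1 hab).symm
  · rw [ha, hb] at hba
    exact (Nat.prime_dvd_prime_iff_eq hq hp).1 hba

theorem min_degree_vertex_has_order_two
    {G : Type*} [Group G] [Fintype G]
    (hG : ¬ (IsCyclic G ∧ ∃ p k : ℕ, p.Prime ∧ Fintype.card G = p ^ k))
    (heq : vertexConnectivity (powerGraph G) = (powerGraph G).minDegree)
    (x : G) (hx : (powerGraph G).degree x = (powerGraph G).minDegree) :
    orderOf x = 2 ∧ 2 ∣ Fintype.card G := by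
  classical
  have hxu : ¬ (powerGraph G).IsUniversal x := by
    intro hxu
    have hcomp := mem_zpowers_or_of_forall_isUniversal (hxu.of_degree_eq_minDegree hx)
    refine hG ⟨isCyclic_of_mem_zpowers_or hcomp, card_eq_prime_pow_of_orderOf_dvd_total ?_⟩
    exact fun a b => (hcomp a b).imp orderOf_dvd_of_mem_zpowers orderOf_dvd_of_mem_zpowers
  have hx1 : x ≠ 1 := by
    rintro rfl
    exact hxu powerGraph_isUniversal_one
  have hx2 : orderOf x = 2 := by
    by_contra hne
    have hxinv : x ≠ x⁻¹ := fun h =>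
      hne (orderOf_eq_prime (by rw [sq, ← inv_eq_iff_mul_eq_one, ← h]) hx1)
    have := vertexConnectivity_lt_degree_of_dominates (powerGraph_adj_inv hxinv)
      (fun w hw => powerGraph_adj_of_adj_inv hw) hxu
    omega
  exact ⟨hx2, hx2 ▸ orderOf_dvd_card⟩
end

section
/- Let G be a finite nilpotent group of order n = p_1^{α_1} ··· p_r^{α_r} with distinct primes p_1 < ··· < p_r, let P_i denote the unique Sylow p_i-subgroup, and for x ∈ G write x = x_1 x_2 ··· x_r with x_i ∈ P_i the unique such decomposition. For x ∈ G \ {e}, let τ_x = { j ∈ [r] : x_j ≠ e }. Then the sets A_x = { y ∈ G : y ≠ x and x ∈ ⟨∏_{i ∈ τ_x} y_i⟩ } and B_x = { y ∈ G : y ≠ x and x ∈ ⟨y⟩ } are equal. -/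
/-! In a finite nilpotent group the Sylow subgroups are normal, so `p`-subgroups for distinct
primes commute and multiplication `∏ i, P i → G` is an injective homomorphism; membership in a
cyclic subgroup can therefore be tested coordinatewise. There, writing `z` for the `τ_x`-part of
`y`, the Chinese remainder theorem gives `z = y ^ m` with `m ≡ 1` modulo the orders of the `y_i`,
`i ∈ τ_x`, and `m ≡ 0` modulo the others, so `⟨z⟩ ≤ ⟨y⟩`. Conversely, if `x = y ^ k` then also
`x = z ^ k`, because the coordinates of `x` outside `τ_x` are trivial. -/

open Function

theorem Finset.noncommProd_univ_eq_prod_ofFn {M : Type*} [Monoid M] {n : ℕ} (f : Fin n → M)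
    (comm : ((Finset.univ : Finset (Fin n)) : Set (Fin n)).Pairwise (onFun Commute f)) :
    Finset.univ.noncommProd f comm = (List.ofFn f).prod := by
  simp [Finset.noncommProd, Multiset.noncommProd_coe]

section PiZPowers

variable {ι : Type*} [Finite ι] {H : ι → Type*} [∀ i, Group (H i)]

/-- The exponent is `a * M` with `a * M + b * N = 1`, where `M` and `N` are the products of the
orders of the coordinates outside and inside `S`. -/
theorem Pi.piecewise_one_mem_zpowers {c : ∀ i, H i}
    (hc : Pairwise fun i j => (orderOf (c i)).Coprime (orderOf (c j)))
    (S : Set ι) [∀ i, Decidable (i ∈ S)] : S.piecewise c 1 ∈ Subgroup.zpowers c := by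
  classical
  have := Fintype.ofFinite ι
  set N := ∏ i ∈ Finset.univ.filter (· ∈ S), orderOf (c i)
  set M := ∏ i ∈ Finset.univ.filter (· ∉ S), orderOf (c i)
  have hMN : M.Coprime N :=
    Nat.Coprime.prod_left fun i hi => Nat.Coprime.prod_right fun j hj =>
      hc fun hij => by simp_all
  have hpow_one {i : ι} {K : ℕ} (hK : orderOf (c i) ∣ K) (m : ℤ) : c i ^ ((K : ℤ) * m) = 1 :=
    orderOf_dvd_iff_zpow_eq_one.mp (dvd_mul_of_dvd_left (Int.natCast_dvd_natCast.mpr hK) m)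
  obtain ⟨a, b, hab⟩ := Nat.isCoprime_iff_coprime.mpr hMN
  refine Subgroup.mem_zpowers_iff.mpr ⟨a * M, funext fun i => ?_⟩
  by_cases hi : i ∈ S
  · have hN : orderOf (c i) ∣ N := Finset.dvd_prod_of_mem _ (by simpa using hi)
    calc (c ^ (a * (M : ℤ))) i = c i * c i ^ ((N : ℤ) * -b) := by
          rw [Pi.pow_apply, ← zpow_one_add, ← hab]; ring_nf
      _ = S.piecewise c 1 i := by rw [hpow_one hN, mul_one, S.piecewise_eq_of_mem _ _ hi]
  · have hM : orderOf (c i) ∣ M := Finset.dvd_prod_of_mem _ (by simpa using hi)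
    rw [Pi.pow_apply, mul_comm, hpow_one hM, S.piecewise_eq_of_notMem _ _ hi, Pi.one_apply]

theorem Pi.mem_zpowers_piecewise_iff [∀ i, DecidableEq (H i)] {c X : ∀ i, H i}
    (hc : Pairwise fun i j => (orderOf (c i)).Coprime (orderOf (c j))) :
    X ∈ Subgroup.zpowers ({i | X i ≠ 1}.piecewise c 1) ↔ X ∈ Subgroup.zpowers c := by
  refine ⟨fun h => Subgroup.zpowers_le.mpr (Pi.piecewise_one_mem_zpowers hc _) h, ?_⟩
  intro h
  obtain ⟨k, rfl⟩ := Subgroup.mem_zpowers_iff.mp h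
  refine Subgroup.mem_zpowers_iff.mpr ⟨k, funext fun i => ?_⟩
  by_cases hi : (c ^ k) i = 1
  · rw [Pi.pow_apply, Set.piecewise_eq_of_notMem _ _ _ (by simpa using hi), Pi.one_apply, one_zpow,
      hi]
  · rw [Pi.pow_apply, Set.piecewise_eq_of_mem _ _ _ hi, Pi.pow_apply]

end PiZPowers

section NilpotentPGroups

variable {G : Type*} [Group G] [Finite G] [Group.IsNilpotent G]

theorem IsPGroup.commute_of_ne {p q : ℕ} [Fact p.Prime] [Fact q.Prime] (hpq : p ≠ q)
    {H K : Subgroup G} (hH : IsPGroup p H) (hK : IsPGroup q K) {x y : G} (hx : x ∈ H)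
    (hy : y ∈ K) : Commute x y := by
  obtain ⟨S, hHS⟩ := hH.exists_le_sylow
  obtain ⟨T, hKT⟩ := hK.exists_le_sylow
  have hST : Disjoint (S : Subgroup G) T :=
    IsPGroup.disjoint_of_ne p q hpq _ _ S.isPGroup' T.isPGroup'
  exact Subgroup.commute_of_normal_of_disjoint S T inferInstance inferInstance hST x y
    (hHS hx) (hKT hy)

variable {ι : Type*} {p : ι → ℕ} [∀ i, Fact (p i).Prime] {P : ι → Subgroup G}

theorem pairwise_commute_of_isPGroup (hp : Injective p) (hP : ∀ i, IsPGroup (p i) (P i)) :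
    Pairwise fun i j => ∀ x y : G, x ∈ P i → y ∈ P j → Commute x y :=
  fun _ _ hij _ _ hx hy => (hP _).commute_of_ne (hp.ne hij) (hP _) hx hy

theorem Subgroup.injective_noncommPiCoprod_of_isPGroup [Fintype ι] (hp : Injective p)
    (hP : ∀ i, IsPGroup (p i) (P i)) :
    Injective (Subgroup.noncommPiCoprod (pairwise_commute_of_isPGroup hp hP)) := by
  have := fun i => Fintype.ofFinite (P i)
  refine Subgroup.injective_noncommPiCoprod_of_iSupIndep
    (Subgroup.independent_of_coprime_order (pairwise_commute_of_isPGroup hp hP) fun i j hij => ?_)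
  simpa only [Nat.card_eq_fintype_card] using
    IsPGroup.coprime_card_of_ne _ _ (hp.ne hij) _ _ (hP i) (hP j)

end NilpotentPGroups

open scoped Classical in
theorem A_x_eq_B_x_general
    {G : Type*} [Group G] [Fintype G] (hnil : Group.IsNilpotent G)
    (r : ℕ) (p α : Fin r → ℕ) (P : Fin r → Subgroup G)
    (hp : ∀ i, (p i).Prime) (hmono : StrictMono p)
    (hP : ∀ i, Nat.card ↥(P i) = p i ^ α i)
    (x : G) (xc : Fin r → G) (hxc : ∀ i, xc i ∈ P i)
    (hxprod : x = (List.ofFn xc).prod) :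
    ∀ (y : G) (yc : Fin r → G), (∀ i, yc i ∈ P i) → y = (List.ofFn yc).prod →
      ((y ≠ x ∧
          x ∈ Subgroup.zpowers ((List.ofFn (fun i => if xc i ≠ 1 then yc i else 1)).prod)) ↔
        (y ≠ x ∧ x ∈ Subgroup.zpowers y)) := by
  intro y yc hyc hyprod
  refine and_congr_right fun _ => ?_
  have := fun i => Fact.mk (hp i)
  have hPp : ∀ i, IsPGroup (p i) (P i) := fun i => IsPGroup.of_card (hP i)
  set φ := Subgroup.noncommPiCoprod (pairwise_commute_of_isPGroup hmono.injective hPp)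
  have hφ (c : ∀ i, P i) : φ c = (List.ofFn fun i => (c i : G)).prod :=
    (Subgroup.noncommPiCoprod_apply _ c).trans (Finset.noncommProd_univ_eq_prod_ofFn _ _)
  let X : ∀ i, P i := fun i => ⟨xc i, hxc i⟩
  let Y : ∀ i, P i := fun i => ⟨yc i, hyc i⟩
  have hz : (List.ofFn fun i => if xc i ≠ 1 then yc i else 1).prod
      = φ ({i | X i ≠ 1}.piecewise Y 1) := by
    rw [hφ]
    congr 2 with i
    by_cases hi : xc i = 1 <;> simp [X, Y, Set.piecewise, hi]
  have hY : Pairwise fun i j => (orderOf (Y i)).Coprime (orderOf (Y j)) := fun i j hij =>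
    ((IsPGroup.coprime_card_of_ne _ _ (hmono.injective.ne hij) _ _ (hPp i) (hPp j)).coprime_dvd_left
      (orderOf_dvd_natCard _)).coprime_dvd_right (orderOf_dvd_natCard _)
  have hinj := Subgroup.injective_noncommPiCoprod_of_isPGroup hmono.injective hPp
  rw [hz, hyprod, hxprod, ← hφ X, ← hφ Y, ← MonoidHom.map_zpowers, ← MonoidHom.map_zpowers,
    Subgroup.mem_map_iff_mem hinj, Subgroup.mem_map_iff_mem hinj]
  exact Pi.mem_zpowers_piecewise_iff hY

open scoped Classical in
/-- Lemma on `A_x = B_x`: for nonidentity `x` with Sylow components `xc`, an element `y ≠ x`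
satisfies `x ∈ ⟨∏_{i ∈ τ_x} y_i⟩` iff `x ∈ ⟨y⟩`. -/
theorem A_x_eq_B_x
    {G : Type*} [Group G] [Fintype G] (hnil : Group.IsNilpotent G)
    (r : ℕ) (p α : Fin r → ℕ) (P : Fin r → Subgroup G)
    (hp : ∀ i, (p i).Prime) (hmono : StrictMono p) (hα : ∀ i, 1 ≤ α i)
    (hcard : Fintype.card G = ∏ i, p i ^ α i)
    (hP : ∀ i, Nat.card ↥(P i) = p i ^ α i)
    (x : G) (hx1 : x ≠ 1) (xc : Fin r → G) (hxc : ∀ i, xc i ∈ P i)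
    (hxprod : x = (List.ofFn xc).prod) :
    ∀ (y : G) (yc : Fin r → G), (∀ i, yc i ∈ P i) → y = (List.ofFn yc).prod →
      ((y ≠ x ∧
          x ∈ Subgroup.zpowers ((List.ofFn (fun i => if xc i ≠ 1 then yc i else 1)).prod)) ↔
        (y ≠ x ∧ x ∈ Subgroup.zpowers y)) :=
  A_x_eq_B_x_general hnil r p α P hp hmono hP x xc hxc hxprod
end

section
/- Let G be a finite nilpotent group of even order n = p_1^{α_1} ··· p_r^{α_r} with p_1 = 2 < p_2 < ··· < p_r and r ≥ 3. Suppose the Sylow 2-subgroup of G is noncyclic and contains a maximal cyclic subgroup of order 2, and that all Sylow p_i-subgroups for i ≥ 2 are cyclic. Then δ(P(G)) < ∏_{i=2}^{r} p_i^{α_i}. -/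
/-!
A finite nilpotent group is the direct product of its Sylow subgroups `Pᵢ`. Let `z ∈ P₀` have
order 2 with `⟨z⟩` maximal cyclic in `P₀`, let `c` generate `P₁`, of odd order `q = p₁^α₁`, and
put `w = z c`, of order `2q`. If `w` is a power of `x`, then the `P₀`-component of `x` is `z`
(as `⟨z⟩` is maximal cyclic) and its `P₁`-component generates `P₁`; if moreover `x ∉ ⟨w⟩`, some
other component of `x` is nontrivial. So with `m = ∏_{i ≥ 2} pᵢ^αᵢ` we get
`deg w ≤ (2q - 1) + φ(q)(m - 1)`, which is less than `q m` because `m ≥ p₂ > p₁`.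
-/

open Finset Subgroup
open scoped Nat

theorem Nat.factorization_prod_pow_apply {ι : Type*} [Fintype ι] {p : ι → ℕ} (α : ι → ℕ)
    (hp : ∀ i, (p i).Prime) (hinj : Function.Injective p) (j : ι) :
    (∏ i, p i ^ α i).factorization (p j) = α j := by
  rw [Nat.factorization_prod_apply fun i _ => pow_ne_zero _ (hp i).ne_zero]
  simp only [(hp _).factorization_pow, Finsupp.single_apply]
  rw [sum_eq_single j (fun i _ hij => if_neg (hinj.ne hij)) (by simp), if_pos rfl]

theorem Nat.two_mul_add_totient_mul_le {p α m : ℕ} (hp : p.Prime) (hα : α ≠ 0) (hm : p < m) :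
    2 * p ^ α + φ (p ^ α) * (m - 1) ≤ p ^ α * m := by
  obtain ⟨β, rfl⟩ := Nat.exists_eq_succ_of_ne_zero hα
  have key : 2 * p + (p - 1) * (m - 1) ≤ p * m := by
    obtain ⟨m, rfl⟩ : ∃ m', m = m' + 1 := ⟨m - 1, by omega⟩
    obtain ⟨p, rfl⟩ : ∃ p', p = p' + 1 := ⟨p - 1, by have := hp.pos; omega⟩
    simp only [Nat.add_sub_cancel]
    nlinarith
  calc 2 * p ^ (β + 1) + φ (p ^ (β + 1)) * (m - 1)
      = p ^ β * (2 * p + (p - 1) * (m - 1)) := by rw [Nat.totient_prime_pow_succ hp]; ring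
    _ ≤ p ^ β * (p * m) := Nat.mul_le_mul_left _ key
    _ = p ^ (β + 1) * m := by ring

theorem Finset.prod_filter_ne_eq_mul_prod_compl_pair {ι M : Type*} [Fintype ι] [DecidableEq ι]
    [CommMonoid M] (f : ι → M) {a b : ι} (hab : a ≠ b) :
    ∏ i ∈ univ.filter (· ≠ a), f i = f b * ∏ i ∈ {a, b}ᶜ, f i := by
  rw [← prod_insert (by simp)]
  congr 1
  ext i
  by_cases i = b <;> simp_all [hab.symm]

section Group

variable {G : Type*} [Group G]

theorem Commute.mem_zpowers_mul_left {x y : G} (h : Commute x y)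
    (hco : (orderOf x).Coprime (orderOf y)) : x ∈ zpowers (x * y) := by
  have bezout := Nat.gcd_eq_gcd_ab (orderOf x) (orderOf y)
  rw [hco.gcd_eq_one, Nat.cast_one] at bezout
  refine mem_zpowers_iff.mpr ⟨orderOf y * (orderOf x).gcdB (orderOf y), ?_⟩
  calc (x * y) ^ (orderOf y * (orderOf x).gcdB (orderOf y) : ℤ)
      = x ^ (orderOf x * (orderOf x).gcdA (orderOf y)
          + orderOf y * (orderOf x).gcdB (orderOf y) : ℤ) := by
        rw [h.mul_zpow, zpow_add, zpow_mul y, zpow_mul x (orderOf x), zpow_natCast, zpow_natCast,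
          pow_orderOf_eq_one, pow_orderOf_eq_one, one_zpow, one_zpow, mul_one, one_mul]
    _ = x := by rw [← bezout, zpow_one]

theorem Commute.mem_zpowers_mul_right {x y : G} (h : Commute x y)
    (hco : (orderOf x).Coprime (orderOf y)) : y ∈ zpowers (x * y) := by
  simpa [h.eq] using h.symm.mem_zpowers_mul_left hco.symm

theorem IsMaximalCyclicIn.eq_of_mem_zpowers {H : Subgroup G} {z : G}
    (hz : IsMaximalCyclicIn H (zpowers z)) (hz2 : orderOf z = 2) (hzH : z ∈ H) (u : H)
    (hu : (⟨z, hzH⟩ : H) ∈ zpowers u) : u = ⟨z, hzH⟩ := by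
  have hu' : z ∈ zpowers (u : G) := by
    simpa [MonoidHom.map_zpowers] using mem_map_of_mem H.subtype hu
  have hzu : zpowers z = zpowers (u : G) :=
    hz.2.2 _ inferInstance (zpowers_le.mpr u.2) (zpowers_le.mpr hu')
  obtain ⟨n, hn⟩ := mem_zpowers_iff.mp (hzu ▸ mem_zpowers (u : G))
  rw [← zpow_mod_orderOf, hz2, Nat.cast_ofNat] at hn
  refine Subtype.ext ?_
  rcases Int.emod_two_eq_zero_or_one n with h | h
  · rw [h, zpow_zero] at hn
    rw [← hn, zpowers_one_eq_bot, mem_bot] at hu'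
    simp [hu'] at hz2
  · rw [h, zpow_one] at hn
    exact hn.symm

end Group

section PowerGraph

variable {G H : Type*} [Group G] [Group H]

def MulEquiv.powerGraphIso (e : G ≃* H) : powerGraph G ≃g powerGraph H where
  toEquiv := e.toEquiv
  map_rel_iff' := by simp [powerGraph, ← map_pow, e.injective.eq_iff]

open scoped Classical in
theorem powerGraph_degree_lt [Fintype G] (w : G) :
    (powerGraph G).degree w <
      orderOf w + #{x | x ∉ zpowers w ∧ ∃ k, 0 < k ∧ w = x ^ k} := by
  set roots : Finset G := {x | x ∉ zpowers w ∧ ∃ k, 0 < k ∧ w = x ^ k}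
  set cyc : Finset G := {x | x ∈ zpowers w}
  have hsub : (powerGraph G).neighborFinset w ⊆ cyc.erase w ∪ roots := by
    intro x hx
    obtain ⟨hne, hroot | ⟨k, -, rfl⟩⟩ := (powerGraph G).mem_neighborFinset w x |>.mp hx
    · by_cases hx : x ∈ zpowers w <;> simp [cyc, roots, hx, hroot, Ne.symm hne]
    · simp [cyc, hne.symm, pow_mem (mem_zpowers w)]
  have hcyc : #cyc = orderOf w := by
    rw [← Fintype.card_subtype, ← Nat.card_eq_fintype_card, Nat.card_zpowers]
  calc (powerGraph G).degree w ≤ #(cyc.erase w ∪ roots) := card_le_card hsub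
    _ ≤ #(cyc.erase w) + #roots := card_union_le _ _
    _ < orderOf w + #roots := by
      rw [← hcyc]
      exact Nat.add_lt_add_right (card_erase_lt_of_mem (by simp [cyc, mem_zpowers])) _

end PowerGraph

section Pi

variable {ι : Type*} [DecidableEq ι] {H : ι → Type*} [∀ i, Group (H i)]
  {a b : ι} {z : H a} {c : H b}

theorem Pi.mem_zpowers_mulSingle_mul_mulSingle (hab : a ≠ b)
    (hco : (orderOf z).Coprime (orderOf c)) (hc : ∀ y, y ∈ zpowers c) {x : ∀ i, H i}
    (hxa : x a = z) (hx : ∀ i, i ≠ a → i ≠ b → x i = 1) :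
    x ∈ zpowers (Pi.mulSingle a z * Pi.mulSingle b c) := by
  have hcomm := Pi.mulSingle_commute hab z c
  have hco' : (orderOf (Pi.mulSingle a z)).Coprime (orderOf (Pi.mulSingle b c)) := by
    rwa [orderOf_piMulSingle, orderOf_piMulSingle]
  obtain ⟨n, hn⟩ := mem_zpowers_iff.mp (hc (x b))
  have hxn : x = Pi.mulSingle a z * Pi.mulSingle b c ^ n := by
    funext i
    by_cases hia : i = a
    · subst hia; simp [hxa, hab]
    by_cases hib : i = b
    · subst hib; simp [hab.symm, hn]
    simp [hia, hib, hx i hia hib]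
  rw [hxn]
  exact mul_mem (hcomm.mem_zpowers_mul_left hco')
    (zpow_mem (hcomm.mem_zpowers_mul_right hco') n)

theorem Pi.apply_eq_of_pow_eq_mulSingle_mul_mulSingle (hab : a ≠ b)
    (hz : ∀ u : H a, z ∈ zpowers u → u = z) {x : ∀ i, H i} {k : ℕ}
    (hk : Pi.mulSingle a z * Pi.mulSingle b c = x ^ k) : x a = z :=
  hz _ ⟨k, by simpa [hab, eq_comm] using congrFun hk a⟩

theorem Pi.orderOf_apply_eq_card_of_pow_eq_mulSingle_mul_mulSingle (hab : a ≠ b)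
    (hc : ∀ y, y ∈ zpowers c) {x : ∀ i, H i} {k : ℕ}
    (hk : Pi.mulSingle a z * Pi.mulSingle b c = x ^ k) : orderOf (x b) = Nat.card (H b) :=
  orderOf_eq_card_of_forall_mem_zpowers fun y =>
    zpowers_le.mpr (mem_zpowers_iff.mpr ⟨k, by simpa [hab.symm] using (congrFun hk b).symm⟩)
      (hc y)

variable [Fintype ι] [∀ i, Fintype (H i)]

open scoped Classical in
theorem card_roots_mulSingle_mul_mulSingle_le (hab : a ≠ b)
    (hz : ∀ u : H a, z ∈ zpowers u → u = z) (hc : ∀ y, y ∈ zpowers c)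
    (hco : (orderOf z).Coprime (orderOf c)) :
    #{x : ∀ i, H i | x ∉ zpowers (Pi.mulSingle a z * Pi.mulSingle b c) ∧
        ∃ k, 0 < k ∧ Pi.mulSingle a z * Pi.mulSingle b c = x ^ k} ≤
      φ (Nat.card (H b)) * (∏ i ∈ {a, b}ᶜ, Nat.card (H i) - 1) := by
  let rest (x : ∀ i, H i) : ∀ i : ({a, b}ᶜ : Finset ι), H i := fun i => x i
  let gens : Finset (H b) := {y | orderOf y = Nat.card (H b)}
  let others : Finset (∀ i : ({a, b}ᶜ : Finset ι), H i) := univ.erase 1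
  calc _ ≤ #(gens ×ˢ others) := by
        refine card_le_card_of_injOn (fun x => (x b, rest x)) ?_ ?_
        · intro x hx
          obtain ⟨hxw, k, -, hk⟩ := (mem_filter.mp hx).2
          have hxa := Pi.apply_eq_of_pow_eq_mulSingle_mul_mulSingle hab hz hk
          refine mem_product.mpr ⟨?_, mem_erase.mpr ⟨fun h1 => hxw ?_, mem_univ _⟩⟩
          · simpa [gens] using Pi.orderOf_apply_eq_card_of_pow_eq_mulSingle_mul_mulSingle hab hc hk
          · exact Pi.mem_zpowers_mulSingle_mul_mulSingle hab hco hc hxa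
              fun i hia hib => congrFun h1 ⟨i, by simp [hia, hib]⟩
        · intro x hx y hy hxy
          obtain ⟨-, k, -, hk⟩ := (mem_filter.mp hx).2
          obtain ⟨-, l, -, hl⟩ := (mem_filter.mp hy).2
          obtain ⟨hxyb, hxyr⟩ := Prod.mk.inj hxy
          funext i
          by_cases hia : i = a
          · subst hia
            rw [Pi.apply_eq_of_pow_eq_mulSingle_mul_mulSingle hab hz hk,
              Pi.apply_eq_of_pow_eq_mulSingle_mul_mulSingle hab hz hl]
          by_cases hib : i = b
          · subst hib; exact hxyb
          exact congrFun hxyr ⟨i, by simp [hia, hib]⟩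
    _ = φ (Nat.card (H b)) * (∏ i ∈ {a, b}ᶜ, Nat.card (H i) - 1) := by
        have : IsCyclic (H b) := ⟨c, hc⟩
        have hgens : #gens = φ (Nat.card (H b)) := by
          simp only [gens, Nat.card_eq_fintype_card]
          exact IsCyclic.card_orderOf_eq_totient dvd_rfl
        have hothers : #others = ∏ i ∈ {a, b}ᶜ, Nat.card (H i) - 1 := by
          rw [card_erase_of_mem (mem_univ _), card_univ, Fintype.card_pi,
            ← prod_coe_sort ({a, b}ᶜ) fun i => Nat.card (H i)]
          simp only [Nat.card_eq_fintype_card]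
        rw [card_product, hgens, hothers]

theorem powerGraph_degree_mulSingle_mul_mulSingle_lt (hab : a ≠ b)
    (hz : ∀ u : H a, z ∈ zpowers u → u = z) (hc : ∀ y, y ∈ zpowers c)
    (hco : (orderOf z).Coprime (orderOf c)) :
    (powerGraph (∀ i, H i)).degree (Pi.mulSingle a z * Pi.mulSingle b c) <
      orderOf z * orderOf c + φ (Nat.card (H b)) * (∏ i ∈ {a, b}ᶜ, Nat.card (H i) - 1) := by
  have hw : orderOf (Pi.mulSingle a z * Pi.mulSingle b c) = orderOf z * orderOf c := by
    rw [(Pi.mulSingle_commute hab z c).orderOf_mul_eq_mul_orderOf_of_coprime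
      (by rwa [orderOf_piMulSingle, orderOf_piMulSingle]), orderOf_piMulSingle,
      orderOf_piMulSingle]
  refine (powerGraph_degree_lt _).trans_le ?_
  rw [hw]
  exact Nat.add_le_add_left (card_roots_mulSingle_mul_mulSingle_le hab hz hc hco) _

end Pi

section Nilpotent

variable {G : Type*} [Group G] [Finite G]

theorem Subgroup.normal_of_card_eq_pow_factorization [Group.IsNilpotent G] {p : ℕ}
    (hp : p.Prime) (H : Subgroup G) (h : Nat.card H = p ^ (Nat.card G).factorization p) :
    H.Normal :=
  have := Fact.mk hp
  inferInstanceAs (Sylow.ofCard H h : Subgroup G).Normal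

noncomputable def Subgroup.mulEquivPiOfCoprime {ι : Type*} [Fintype ι] (P : ι → Subgroup G)
    [hn : ∀ i, (P i).Normal]
    (hco : Pairwise fun i j => (Nat.card (P i)).Coprime (Nat.card (P j)))
    (hcard : ∏ i, Nat.card (P i) = Nat.card G) : (∀ i, P i) ≃* G :=
  have hcomm : Pairwise fun i j => ∀ x y : G, x ∈ P i → y ∈ P j → Commute x y :=
    fun i j hij => commute_of_normal_of_disjoint _ _ (hn i) (hn j)
      (disjoint_of_coprime_natCard (hco hij))
  have := fun i => Fintype.ofFinite (P i)
  MulEquiv.ofBijective (noncommPiCoprod hcomm) <|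
    (injective_noncommPiCoprod_of_iSupIndep <| independent_of_coprime_order hcomm <| by
      simpa only [Nat.card_eq_fintype_card] using hco).bijective_of_nat_card_le
      (by rw [Nat.card_pi, hcard])

theorem nonempty_mulEquiv_pi_of_card_eq_prod [Group.IsNilpotent G] {ι : Type*} [Fintype ι]
    {p α : ι → ℕ} (hp : ∀ i, (p i).Prime) (hinj : Function.Injective p) (P : ι → Subgroup G)
    (hP : ∀ i, Nat.card (P i) = p i ^ α i) (hcard : Nat.card G = ∏ i, p i ^ α i) :
    Nonempty ((∀ i, P i) ≃* G) :=
  have (i : ι) : (P i).Normal := normal_of_card_eq_pow_factorization (hp i) _ <| by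
    rw [hP, hcard, Nat.factorization_prod_pow_apply α hp hinj]
  ⟨mulEquivPiOfCoprime P
    (fun i j hij => by
      simpa only [hP] using .pow _ _ ((Nat.coprime_primes (hp i) (hp j)).mpr (hinj.ne hij)))
    (by simp only [hP, hcard])⟩

end Nilpotent

open scoped Classical in
/-- If `r ≥ 3`, the Sylow 2-subgroup is noncyclic with a maximal cyclic subgroup of order 2,
and all other Sylow subgroups are cyclic, then `δ(P(G)) < ∏_{i=2}^{r} p_i^{α_i}`. -/
theorem min_degree_lt_odd_part
    {G : Type*} [Group G] [Fintype G] (hnil : Group.IsNilpotent G)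
    (r : ℕ) (hr : 3 ≤ r) (p α : Fin r → ℕ) (P : Fin r → Subgroup G)
    (hp : ∀ i, (p i).Prime) (hmono : StrictMono p) (hα : ∀ i, 1 ≤ α i)
    (hcard : Fintype.card G = ∏ i, p i ^ α i)
    (hP : ∀ i, Nat.card ↥(P i) = p i ^ α i)
    (hp0 : p ⟨0, by omega⟩ = 2)
    (hmax2 : ∃ z : G, z ∈ P ⟨0, by omega⟩ ∧
      IsMaximalCyclicIn (P ⟨0, by omega⟩) (Subgroup.zpowers z) ∧ orderOf z = 2)
    (hcyc : ∀ i : Fin r, i ≠ ⟨0, by omega⟩ → IsCyclic ↥(P i)) :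
    (powerGraph G).minDegree <
      ∏ i ∈ Finset.univ.filter (fun i : Fin r => i ≠ ⟨0, by omega⟩), p i ^ α i := by
  set i0 : Fin r := ⟨0, by omega⟩
  set i1 : Fin r := ⟨1, by omega⟩
  set i2 : Fin r := ⟨2, by omega⟩
  have hi01 : i0 ≠ i1 := by simp [i0, i1]
  obtain ⟨e⟩ := nonempty_mulEquiv_pi_of_card_eq_prod hp hmono.injective P hP
    (by rw [Nat.card_eq_fintype_card, hcard])
  obtain ⟨z, hzP, hzmax, hz2⟩ := hmax2
  obtain ⟨c, hc⟩ := (hcyc i1 hi01.symm).exists_generator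
  have hzord : orderOf (⟨z, hzP⟩ : P i0) = 2 := by rw [orderOf_mk, hz2]
  have hcord : orderOf c = p i1 ^ α i1 := by rw [orderOf_eq_card_of_forall_mem_zpowers hc, hP]
  have hco : (orderOf (⟨z, hzP⟩ : P i0)).Coprime (orderOf c) := by
    have hp1 : p i0 < p i1 := hmono (show i0 < i1 by simp [i0, i1, Fin.lt_def])
    rw [hzord, hcord, Nat.coprime_two_left]
    exact ((hp i1).odd_of_ne_two (by omega)).pow
  have hm : p i1 < ∏ i ∈ {i0, i1}ᶜ, p i ^ α i := calc
    p i1 < p i2 := hmono (show i1 < i2 by simp [i1, i2, Fin.lt_def])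
    _ ≤ p i2 ^ α i2 := Nat.le_self_pow (by have := hα i2; omega) _
    _ ≤ ∏ i ∈ {i0, i1}ᶜ, p i ^ α i :=
      single_le_prod' (fun i _ => Nat.one_le_pow _ _ (hp i).pos) (by simp [i0, i1, i2])
  calc (powerGraph G).minDegree = (powerGraph (∀ i, P i)).minDegree :=
        e.powerGraphIso.symm.minDegree_eq
    _ ≤ (powerGraph (∀ i, P i)).degree (Pi.mulSingle i0 ⟨z, hzP⟩ * Pi.mulSingle i1 c) :=
        SimpleGraph.minDegree_le_degree _ _
    _ < 2 * p i1 ^ α i1 + φ (p i1 ^ α i1) * (∏ i ∈ {i0, i1}ᶜ, p i ^ α i - 1) := by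
        simpa only [hzord, hcord, hP] using
          powerGraph_degree_mulSingle_mul_mulSingle_lt (H := fun i => P i) hi01
            (hzmax.eq_of_mem_zpowers hz2 hzP) hc hco
    _ ≤ p i1 ^ α i1 * ∏ i ∈ {i0, i1}ᶜ, p i ^ α i :=
        Nat.two_mul_add_totient_mul_le (hp i1) (by have := hα i1; omega) hm
    _ = _ := (prod_filter_ne_eq_mul_prod_compl_pair (fun i => p i ^ α i) hi01).symm
end

section
/- Let G be a finite nilpotent group of order p_1^{α_1} p_2^{α_2} with primes p_1 < p_2, whose Sylow p_1-subgroup P_1 is noncyclic and whose Sylow p_2-subgroup P_2 is cyclic. If ⟨y⟩ is a maximal cyclic subgroup of G with Sylow decomposition y = y_1 y_2 (y_i ∈ P_i), then deg(y) < deg(y_2) in the power graph P(G). -/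
/-!
Every neighbour of `y` lies in the maximal cyclic subgroup `⟨y⟩`, so
`deg y < o(y) ≤ o(y₁) o(y₂)`, and `o(y₁) ≤ |P₁| / p₁` because `P₁` is not cyclic.
On the other side, `P₁` and `P₂` are normal Sylow subgroups and commute elementwise, so for
`z ∈ P₁` and `w ∈ P₂` with `y₂ ∈ ⟨w⟩` the element `y₂` is a power of `z w`. In the cyclic
`p₂`-group `P₂` all but at most `o(y₂) / p₂` elements `w` satisfy `y₂ ∈ ⟨w⟩`, hence
`deg y₂ + 1 ≥ |P₁| (|P₂| - o(y₂) / p₂)`, which exceeds `o(y₁) o(y₂)` since `p₁ ≥ 2`, `p₂ ≥ 3`.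
-/

open Finset Subgroup

theorem Commute.mem_powers_mul_of_coprime {G : Type*} [Group G] {x y : G} (h : Commute x y)
    (hco : (orderOf x).Coprime (orderOf y)) : y ∈ Submonoid.powers (x * y) := by
  obtain ⟨m, hm⟩ := exists_pow_eq_self_of_coprime hco
  refine ⟨orderOf x * m, show (x * y) ^ (orderOf x * m) = y from ?_⟩
  rw [pow_mul, h.mul_pow, pow_orderOf_eq_one, one_mul, hm]

theorem card_filter_mem_zpowers {G : Type*} [Group G] [Fintype G] (w : G) :
    #{z | z ∈ zpowers w} = orderOf w := by
  rw [← Fintype.card_subtype, ← Nat.card_eq_fintype_card, Nat.card_zpowers]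

/-- In a cyclic group the `o(w)` elements of `⟨w⟩` exhaust the at most `o(w)` solutions of
`z ^ o(w) = 1`. -/
theorem IsCyclic.mem_zpowers_of_orderOf_dvd {H : Type*} [Group H] [Finite H] [IsCyclic H]
    {x w : H} (h : orderOf x ∣ orderOf w) : x ∈ zpowers w := by
  classical
  have := Fintype.ofFinite H
  have hsub : ({z | z ∈ zpowers w} : Finset H) ⊆ ({z | z ^ orderOf w = 1} : Finset H) := by
    intro z hz
    obtain ⟨k, rfl⟩ := mem_powers_iff_mem_zpowers.mpr (mem_filter.mp hz).2
    rw [mem_filter, ← pow_mul, mul_comm, pow_mul, pow_orderOf_eq_one, one_pow]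
    exact ⟨mem_univ _, rfl⟩
  have hcard : #({z | z ^ orderOf w = 1} : Finset H) ≤ #{z | z ∈ zpowers w} := by
    rw [card_filter_mem_zpowers]
    exact IsCyclic.card_pow_eq_one_le (orderOf_pos w)
  have hx : x ∈ ({z | z ^ orderOf w = 1} : Finset H) := by
    simpa using orderOf_dvd_iff_pow_eq_one.mp h
  rw [← eq_of_subset_of_card_le hsub hcard] at hx
  exact (mem_filter.mp hx).2

theorem IsPGroup.orderOf_mul_dvd_card_of_not_isCyclic {H : Type*} [Group H] [Finite H] {p : ℕ}
    [hp : Fact p.Prime] (hH : IsPGroup p H) (hnc : ¬ IsCyclic H) (g : H) :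
    orderOf g * p ∣ Nat.card H := by
  obtain ⟨n, hn⟩ := hH.exists_card_eq
  obtain ⟨i, hin, hi⟩ := (Nat.dvd_prime_pow hp.out).mp (hn ▸ orderOf_dvd_natCard g)
  have hlt : i < n := lt_of_le_of_ne hin fun h =>
    hnc (isCyclic_of_orderOf_eq_card g (by rw [hi, hn, h]))
  rw [hi, hn, ← pow_succ]
  exact pow_dvd_pow p hlt

theorem IsPGroup.card_le_card_mem_zpowers_add {H : Type*} [Group H] [Finite H] [IsCyclic H]
    {p : ℕ} [hp : Fact p.Prime] (hH : IsPGroup p H) (x : H) :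
    Nat.card H ≤ Nat.card {w // x ∈ zpowers w} + orderOf x / p := by
  classical
  have := Fintype.ofFinite H
  rw [Nat.card_eq_fintype_card, Nat.card_eq_fintype_card, Fintype.card_subtype, ← card_univ,
    ← card_filter_add_card_filter_not (fun w => x ∈ zpowers w)]
  gcongr
  obtain ⟨i, hi⟩ := IsPGroup.iff_orderOf.mp hH x
  cases i with
  | zero =>
    rw [pow_zero, orderOf_eq_one_iff] at hi
    simp [hi]
  | succ j =>
    rw [hi, pow_succ, Nat.mul_div_cancel _ hp.out.pos]
    refine (card_le_card fun w hw => ?_).trans (IsCyclic.card_pow_eq_one_le (pow_pos hp.out.pos j))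
    simp only [mem_filter, mem_univ, true_and] at hw ⊢
    obtain ⟨k, hk⟩ := IsPGroup.iff_orderOf.mp hH w
    have hkj : k ≤ j := by
      by_contra! hjk
      exact hw (IsCyclic.mem_zpowers_of_orderOf_dvd (by rw [hi, hk]; exact pow_dvd_pow p hjk))
    exact orderOf_dvd_iff_pow_eq_one.mp (hk ▸ pow_dvd_pow p hkj)

theorem powerGraph_adj_of_mem_zpowers {G : Type*} [Group G] [Finite G] {x u : G} (hne : x ≠ u)
    (h : x ∈ zpowers u) : (powerGraph G).Adj x u := by
  obtain ⟨k, rfl⟩ := mem_powers_iff_mem_zpowers.mpr h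
  refine ⟨hne, Or.inl ⟨k + orderOf u, by have := orderOf_pos u; omega, ?_⟩⟩
  rw [pow_add, pow_orderOf_eq_one, mul_one]

theorem card_mem_zpowers_le_degree_add_one {G : Type*} [Group G] [Fintype G] (x : G) :
    Nat.card {u // x ∈ zpowers u} ≤ (powerGraph G).degree x + 1 := by
  classical
  rw [Nat.card_eq_fintype_card, Fintype.card_subtype]
  refine (card_le_card fun u hu => ?_).trans (card_insert_le x ((powerGraph G).neighborFinset x))
  rw [mem_insert, SimpleGraph.mem_neighborFinset]
  by_cases hxu : x = u
  · exact Or.inl hxu.symm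
  · exact Or.inr (powerGraph_adj_of_mem_zpowers hxu (mem_filter.mp hu).2)

theorem IsMaximalCyclic.degree_add_one_le_orderOf {G : Type*} [Group G] [Fintype G] {y : G}
    (hmax : IsMaximalCyclic (zpowers y)) : (powerGraph G).degree y + 1 ≤ orderOf y := by
  classical
  have hsub : insert y ((powerGraph G).neighborFinset y) ⊆ ({u | u ∈ zpowers y} : Finset G) := by
    intro u hu
    rw [mem_insert, SimpleGraph.mem_neighborFinset] at hu
    rw [mem_filter]
    refine ⟨mem_univ u, ?_⟩
    rcases hu with rfl | ⟨-, ⟨k, -, rfl⟩ | ⟨k, -, rfl⟩⟩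
    · exact mem_zpowers u
    · rw [hmax.2 (zpowers u) inferInstance (zpowers_le.mpr (pow_mem (mem_zpowers u) k))]
      exact mem_zpowers u
    · exact pow_mem (mem_zpowers y) k
  have hy : y ∉ (powerGraph G).neighborFinset y := by simp
  simpa [card_insert_of_notMem hy, card_filter_mem_zpowers] using card_le_card hsub

theorem Subgroup.normal_of_card_eq_prime_pow_mul {G : Type*} [Group G] [Finite G]
    [Group.IsNilpotent G] {p a m : ℕ} [hp : Fact p.Prime] {P : Subgroup G}
    (hP : Nat.card P = p ^ a) (hG : Nat.card G = p ^ a * m) (hm : ¬ p ∣ m) : P.Normal := by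
  have hfact : (Nat.card G).factorization p = a := by
    rw [hG, Nat.factorization_mul (pow_ne_zero a hp.out.ne_zero) (by rintro rfl; simp at hm),
      Finsupp.add_apply, Nat.factorization_pow_self hp.out, Nat.factorization_eq_zero_of_not_dvd hm,
      add_zero]
  exact (inferInstance : (Sylow.ofCard P (by rw [hP, hfact]) : Subgroup G).Normal)

theorem commute_of_card_eq_prime_pow_mul_prime_pow {G : Type*} [Group G] [Finite G]
    [Group.IsNilpotent G] {p q a b : ℕ} [hp : Fact p.Prime] [hq : Fact q.Prime] (hpq : p ≠ q)
    {P Q : Subgroup G} (hG : Nat.card G = p ^ a * q ^ b) (hP : Nat.card P = p ^ a)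
    (hQ : Nat.card Q = q ^ b) : ∀ x ∈ P, ∀ y ∈ Q, Commute x y := by
  have hndvd {r s : ℕ} (hr : r.Prime) (hs : s.Prime) (hrs : r ≠ s) (k : ℕ) : ¬ r ∣ s ^ k :=
    fun h => hrs ((Nat.prime_dvd_prime_iff_eq hr hs).mp (hr.dvd_of_dvd_pow h))
  have hcop : (Nat.card P).Coprime (Nat.card Q) := by
    rw [hP, hQ]; exact .pow _ _ ((Nat.coprime_primes hp.out hq.out).mpr hpq)
  have hPn := normal_of_card_eq_prime_pow_mul hP hG (hndvd hp.out hq.out hpq _)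
  have hQn := normal_of_card_eq_prime_pow_mul hQ (hG.trans (mul_comm _ _))
    (hndvd hq.out hp.out hpq.symm _)
  exact fun x hx y hy =>
    commute_of_normal_of_disjoint _ _ hPn hQn (disjoint_of_coprime_natCard hcop) x y hx hy

theorem card_mul_card_mem_zpowers_le {G : Type*} [Group G] [Finite G] {P Q : Subgroup G}
    (hcomm : ∀ a ∈ P, ∀ b ∈ Q, Commute a b) (hcop : (Nat.card P).Coprime (Nat.card Q)) (x : Q) :
    Nat.card P * Nat.card {w : Q // x ∈ zpowers w} ≤ Nat.card {u : G // (x : G) ∈ zpowers u} := by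
  rw [← Nat.card_prod]
  refine Nat.card_le_card_of_injective (fun aw => ⟨aw.1 * aw.2.1, ?_⟩) fun aw bw h => ?_
  · obtain ⟨⟨a, ha⟩, ⟨w, hw⟩, hxw⟩ := aw
    obtain ⟨k, hk⟩ := mem_zpowers_iff.mp hxw
    have hco : (orderOf a).Coprime (orderOf w) :=
      (hcop.coprime_dvd_left (orderOf_dvd_natCard P ha)).coprime_dvd_right
        (orderOf_dvd_natCard Q hw)
    have hw' : w ∈ zpowers (a * w) :=
      mem_powers_iff_mem_zpowers.mp ((hcomm a ha w hw).mem_powers_mul_of_coprime hco)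
    have hx : (x : G) = w ^ k := by rw [← hk, Subgroup.coe_zpow]
    exact hx ▸ zpow_mem hw' k
  · have := mul_injective_of_disjoint (disjoint_of_coprime_natCard hcop)
      (a₁ := (aw.1, aw.2.1)) (a₂ := (bw.1, bw.2.1)) (congrArg Subtype.val h)
    simp only [Prod.mk.injEq] at this
    exact Prod.ext this.1 (Subtype.ext this.2)

theorem Nat.lt_mul_sub_div {m n p q : ℕ} (hm : 0 < m) (hmn : m ≤ n) (hp : 2 ≤ p) (hq : 3 ≤ q) :
    m < p * (n - m / q) := by
  have : m / q * 3 ≤ m := (Nat.mul_le_mul_left _ hq).trans (Nat.div_mul_le_self m q)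
  calc m < 2 * (n - m / q) := by omega
    _ ≤ p * (n - m / q) := Nat.mul_le_mul_right _ hp

theorem degree_lt_degree_second_component_general
    {G : Type*} [Group G] [Fintype G] (hnil : Group.IsNilpotent G)
    (p₁ p₂ α₁ α₂ : ℕ) (hp₁ : p₁.Prime) (hp₂ : p₂.Prime) (hlt : p₁ < p₂)
    (P₁ P₂ : Subgroup G)
    (hcard : Fintype.card G = p₁ ^ α₁ * p₂ ^ α₂)
    (hP₁ : Nat.card ↥P₁ = p₁ ^ α₁) (hP₂ : Nat.card ↥P₂ = p₂ ^ α₂)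
    (hP₁nc : ¬ IsCyclic ↥P₁) (hP₂c : IsCyclic ↥P₂)
    (y y₁ y₂ : G) (hy₁ : y₁ ∈ P₁) (hy₂ : y₂ ∈ P₂) (hy : y = y₁ * y₂)
    (hmax : IsMaximalCyclic (Subgroup.zpowers y)) :
    (powerGraph G).degree y < (powerGraph G).degree y₂ := by
  have : Fact p₁.Prime := ⟨hp₁⟩
  have : Fact p₂.Prime := ⟨hp₂⟩
  have hcop : (Nat.card P₁).Coprime (Nat.card P₂) := by
    rw [hP₁, hP₂]; exact .pow _ _ ((Nat.coprime_primes hp₁ hp₂).mpr hlt.ne)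
  have hcomm := commute_of_card_eq_prime_pow_mul_prime_pow hlt.ne
    (Nat.card_eq_fintype_card.trans hcard) hP₁ hP₂
  have hord₁ : orderOf y₁ * p₁ ≤ Nat.card P₁ := Nat.le_of_dvd Nat.card_pos <| by
    simpa using (IsPGroup.of_card hP₁).orderOf_mul_dvd_card_of_not_isCyclic hP₁nc ⟨y₁, hy₁⟩
  have hlt₂ := Nat.lt_mul_sub_div (orderOf_pos y₂)
    (Nat.le_of_dvd Nat.card_pos (orderOf_dvd_natCard P₂ hy₂)) hp₁.two_le (hp₁.two_le.trans_lt hlt)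
  suffices (powerGraph G).degree y + 1 < (powerGraph G).degree y₂ + 1 by omega
  calc (powerGraph G).degree y + 1 ≤ orderOf y := hmax.degree_add_one_le_orderOf
    _ ≤ orderOf y₁ * orderOf y₂ := Nat.le_of_dvd (mul_pos (orderOf_pos y₁) (orderOf_pos y₂))
      (hy ▸ (hcomm y₁ hy₁ y₂ hy₂).orderOf_mul_dvd_mul_orderOf)
    _ < orderOf y₁ * (p₁ * (Nat.card P₂ - orderOf y₂ / p₂)) :=
      Nat.mul_lt_mul_of_pos_left hlt₂ (orderOf_pos y₁)
    _ ≤ Nat.card P₁ * (Nat.card P₂ - orderOf y₂ / p₂) := by rw [← mul_assoc]; gcongr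
    _ ≤ Nat.card P₁ * Nat.card {w : P₂ // ⟨y₂, hy₂⟩ ∈ zpowers w} := by
      gcongr
      simpa using (IsPGroup.of_card hP₂).card_le_card_mem_zpowers_add ⟨y₂, hy₂⟩
    _ ≤ Nat.card {u : G // y₂ ∈ zpowers u} := card_mul_card_mem_zpowers_le hcomm hcop ⟨y₂, hy₂⟩
    _ ≤ (powerGraph G).degree y₂ + 1 := card_mem_zpowers_le_degree_add_one y₂

/-- If `⟨y⟩` is a maximal cyclic subgroup of `G` with Sylow decomposition `y = y₁ y₂`,
where `P₁` is noncyclic and `P₂` is cyclic, then `deg(y) < deg(y₂)`. -/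
theorem degree_lt_degree_second_component
    {G : Type*} [Group G] [Fintype G] (hnil : Group.IsNilpotent G)
    (p₁ p₂ α₁ α₂ : ℕ) (hp₁ : p₁.Prime) (hp₂ : p₂.Prime) (hlt : p₁ < p₂)
    (hα₁ : 1 ≤ α₁) (hα₂ : 1 ≤ α₂)
    (P₁ P₂ : Subgroup G)
    (hcard : Fintype.card G = p₁ ^ α₁ * p₂ ^ α₂)
    (hP₁ : Nat.card ↥P₁ = p₁ ^ α₁) (hP₂ : Nat.card ↥P₂ = p₂ ^ α₂)
    (hP₁nc : ¬ IsCyclic ↥P₁) (hP₂c : IsCyclic ↥P₂)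
    (y y₁ y₂ : G) (hy₁ : y₁ ∈ P₁) (hy₂ : y₂ ∈ P₂) (hy : y = y₁ * y₂)
    (hmax : IsMaximalCyclic (Subgroup.zpowers y)) :
    (powerGraph G).degree y < (powerGraph G).degree y₂ :=
  degree_lt_degree_second_component_general hnil p₁ p₂ α₁ α₂ hp₁ hp₂ hlt P₁ P₂ hcard hP₁ hP₂ hP₁nc
    hP₂c y y₁ y₂ hy₁ hy₂ hy hmax
end
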